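/- arXiv:1709.00545 — 2 statements merged into one kernel-verified Lean document; each statement's English description precedes it below -/
import Mathlib

section
/- Let G be a connected multigraph and γ ⊆ G a connected subgraph spanned by a subset of edges. Then ψ_G = ψ_γ · ψ_{G/γ} + R_γ, where R_γ is a polynomial each of whose monomials has degree strictly greater than |γ| (the first Betti number of γ) in the variables x_e with e ∈ E(γ). -/
open MvPolynomial

structure MGraph (V E : Type) where
  ends : E → Sym2 V

namespace MGraph

variable {V E : Type} (G : MGraph V E)

def adj (S : Set E) (u v : V) : Prop := ∃ e ∈ S, G.ends e = s(u, v)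

def conn (S : Set E) (u v : V) : Prop := Relation.ReflTransGen (G.adj S) u v

def Connected : Prop := ∀ u v : V, G.conn Set.univ u v

def IsForest (S : Set E) : Prop :=
  ∀ e ∈ S, ∀ u v : V, G.ends e = s(u, v) → ¬ G.conn (S \ {e}) u v

def IsSpanningTree (T : Set E) : Prop := G.IsForest T ∧ ∀ u v : V, G.conn T u v

def IsSpanningForestOf (S T : Set E) : Prop :=
  T ⊆ S ∧ G.IsForest T ∧ ∀ u v : V, G.conn S u v → G.conn T u v

noncomputable def psi : MvPolynomial E ℝ :=
  ∑ᶠ T ∈ {T : Set E | G.IsSpanningTree T}, ∏ᶠ e ∈ Tᶜ, (X e : MvPolynomial E ℝ)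

noncomputable def psiSub (S : Set E) : MvPolynomial E ℝ :=
  ∑ᶠ T ∈ {T : Set E | G.IsSpanningForestOf S T}, ∏ᶠ e ∈ S \ T, (X e : MvPolynomial E ℝ)

noncomputable def ncomp (S : Set E) : ℕ := Nat.card (Quot (G.adj S))

noncomputable def betti (S : Set E) : ℤ :=
  (Nat.card S : ℤ) - (Nat.card V : ℤ) + (G.ncomp S : ℤ)

noncomputable def rank : ℤ := G.betti Set.univ

def IsCore (S : Set E) : Prop := ∀ e ∈ S, G.betti (S \ {e}) < G.betti S

noncomputable def contract (S : Set E) : MGraph (Quot (G.adj S)) ↥(Sᶜ) :=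
  ⟨fun e => (G.ends e.1).map (Quot.mk (G.adj S))⟩

open Classical in
noncomputable def deg (v : V) : ℕ :=
  ∑ᶠ e : E, if G.ends e = s(v, v) then 2 else if v ∈ G.ends e then 1 else 0

noncomputable def sdd (d : ℤ) (S : Set E) : ℤ :=
  d * G.betti S - 2 * (Nat.card S : ℤ)

end MGraph

/-!
Sort the spanning trees `T` of `G` by their trace `T ∩ S`. When `T ∩ S` is a spanning forest
of `S`, the rest of `T` is a spanning tree `T'` of `G / S`, and `T ↦ (T ∩ S, T')` is a bijection
onto pairs (spanning forest of `S`, spanning tree of `G / S`) under which the monomials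
multiply: these trees make up `ψ_S · ψ_{G/S}`. Otherwise `T ∩ S` is a forest with more
components than `S`, so `|T ∩ S| < |V| - c(S)` (`c` counting components), and the monomial of
`T` has degree `|S \ T| > |S| - |V| + c(S) = betti S` in the variables of `S`.
-/

section

variable {E : Type} {S F : Set E} {T' : Set ↥Sᶜ}

lemma union_image_val_inter (hFS : F ⊆ S) : (F ∪ Subtype.val '' T') ∩ S = F := by
  ext x; have := @hFS x; by_cases hx : x ∈ S <;> aesop

lemma preimage_val_union_image (hFS : F ⊆ S) : Subtype.val ⁻¹' (F ∪ Subtype.val '' T') = T' := by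
  ext ⟨x, hx⟩; simpa using fun h => absurd (hFS h) hx

lemma inter_union_image_preimage_val (T : Set E) :
    (T ∩ S) ∪ Subtype.val '' (Subtype.val ⁻¹' T : Set ↥Sᶜ) = T := by
  ext x; by_cases hx : x ∈ S <;> aesop

lemma compl_union_image_val (hFS : F ⊆ S) :
    (F ∪ Subtype.val '' T')ᶜ = (S \ F) ∪ Subtype.val '' T'ᶜ := by
  ext x; have := @hFS x; by_cases hx : x ∈ S <;> aesop

end

section Monomials

variable {σ τ R : Type} [CommSemiring R]

lemma rename_finprod_X {f : σ → τ} (hf : Function.Injective f) {A : Set σ} (hA : A.Finite) :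
    rename f (∏ᶠ e ∈ A, (X e : MvPolynomial σ R)) = ∏ᶠ e ∈ f '' A, X e := by
  rw [finprod_mem_image hf.injOn, ← AlgHom.coe_toMonoidHom,
    MonoidHom.map_finprod_mem _ _ hA]
  simp only [AlgHom.coe_toMonoidHom, rename_X]

lemma finprod_X_eq_monomial {A : Set σ} (hA : A.Finite) :
    ∏ᶠ e ∈ A, (X e : MvPolynomial σ R) = monomial (∑ e ∈ hA.toFinset, Finsupp.single e 1) 1 := by
  rw [finprod_mem_eq_finite_toFinset_prod _ hA, monomial_sum_one]
  rfl

lemma sum_coe_eq_ncard_of_mem_support_finprod_X [Nontrivial R] {A : Set σ} (hA : A.Finite)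
    {m : σ →₀ ℕ} (hm : m ∈ (∏ᶠ e ∈ A, (X e : MvPolynomial σ R)).support) (S : Set σ) :
    ∑ᶠ e ∈ S, (m e : ℤ) = (S ∩ A).ncard := by
  classical
  rw [finprod_X_eq_monomial hA, support_monomial, if_neg one_ne_zero, Finset.mem_singleton] at hm
  have hmA : ∀ e, (m e : ℤ) = if e ∈ A then 1 else 0 := fun e => by
    simp [hm, Finsupp.finsetSum_apply, Finsupp.single_apply]
  rw [finsum_mem_inter_support_eq' _ S (S ∩ A) fun e he => by simp_all, ← finsum_one,
    Nat.cast_finsum_mem (hA.inter_of_right S)]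
  exact finsum_mem_congr rfl fun e he => by simp [hmA, he.2]

lemma exists_mem_support_of_mem_support_finsum_mem {ι : Type} {s : Set ι} (hs : s.Finite)
    {f : ι → MvPolynomial σ R} {m : σ →₀ ℕ} (hm : m ∈ (∑ᶠ i ∈ s, f i).support) :
    ∃ i ∈ s, m ∈ (f i).support := by
  classical
  rw [finsum_mem_eq_finite_toFinset_sum _ hs] at hm
  obtain ⟨i, hi, h⟩ := Finset.mem_biUnion.mp (support_sum hm)
  exact ⟨i, hs.mem_toFinset.mp hi, h⟩

end Monomials

namespace MGraph

variable {V E : Type} {G : MGraph V E} {S : Set E}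

instance : Std.Symm (G.adj S) := ⟨fun _ _ ⟨e, he, h⟩ => ⟨e, he, h.trans Sym2.eq_swap⟩⟩

lemma conn_symm {u v : V} (h : G.conn S u v) : G.conn S v u :=
  Std.Symm.symm (r := Relation.ReflTransGen (G.adj S)) _ _ h

lemma conn_mono {S' : Set E} (hS : S ⊆ S') {u v : V} (h : G.conn S u v) : G.conn S' u v :=
  Relation.ReflTransGen.mono (fun _ _ ⟨e, he, h⟩ => ⟨e, hS he, h⟩) _ _ h

lemma conn_of_ends {e : E} (he : e ∈ S) {u v : V} (h : G.ends e = s(u, v)) : G.conn S u v :=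
  .single ⟨e, he, h⟩

lemma quot_mk_eq_iff_conn {u v : V} :
    Quot.mk (G.adj S) u = Quot.mk (G.adj S) v ↔ G.conn S u v := by
  rw [Quot.eq, Relation.EqvGen.eqvGen_eq_reflTransGen]
  rfl

lemma conn_sdiff_singleton_or_of_conn {f : E} {u v : V} (h : G.conn S u v) :
    G.conn (S \ {f}) u v ∨
      ∃ a b, G.ends f = s(a, b) ∧ G.conn (S \ {f}) u a ∧ G.conn (S \ {f}) b v := by
  induction h with
  | refl => exact .inl .refl
  | @tail x y _ hxy ih =>
    obtain ⟨e, he, hends⟩ := hxy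
    by_cases hef : e = f
    · subst hef
      rcases ih with hux | ⟨a, b, hab, hua, hbx⟩
      · exact .inr ⟨x, y, hends, hux, .refl⟩
      · rw [hab, Sym2.eq_iff] at hends
        rcases hends with ⟨rfl, rfl⟩ | ⟨rfl, rfl⟩
        · exact .inr ⟨a, b, hab, hua, .refl⟩
        · exact .inl hua
    · have hxy : G.conn (S \ {f}) x y := conn_of_ends (show e ∈ S \ {f} from ⟨he, hef⟩) hends
      rcases ih with hux | ⟨a, b, hab, hua, hbx⟩
      · exact .inl (hux.trans hxy)
      · exact .inr ⟨a, b, hab, hua, hbx.trans hxy⟩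

lemma IsForest.mono {F : Set E} (hS : G.IsForest S) (hF : F ⊆ S) : G.IsForest F :=
  fun e he u v hends hconn =>
    hS e (hF he) u v hends (conn_mono (Set.sdiff_subset_sdiff_left hF) hconn)

section Components

variable [Finite V]

lemma ncomp_le_card (S : Set E) : G.ncomp S ≤ Nat.card V :=
  Nat.card_le_card_of_surjective _ Quot.mk_surjective

lemma ncomp_lt_of_not_conn {F : Set E} (hF : F ⊆ S) {u v : V} (hS : G.conn S u v)
    (hnF : ¬ G.conn F u v) : G.ncomp S < G.ncomp F := by
  let φ : Quot (G.adj F) → Quot (G.adj S) :=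
    Quot.lift (Quot.mk _) fun _ _ ⟨e, he, h⟩ => Quot.sound ⟨e, hF he, h⟩
  have hφ : Function.Surjective φ := Quot.ind fun w => ⟨Quot.mk _ w, rfl⟩
  refine (Nat.card_le_card_of_surjective φ hφ).lt_of_ne fun hcard => hnF ?_
  have hinj := ((Nat.bijective_iff_surjective_and_card φ).mpr ⟨hφ, hcard.symm⟩).1
  exact quot_mk_eq_iff_conn.mp (hinj (quot_mk_eq_iff_conn.mpr hS))

-- Deleting an edge of a forest disconnects its ends, so it raises the number of components.
lemma IsForest.ncard_add_ncomp_le [Finite E] {F : Set E} (hF : G.IsForest F) :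
    F.ncard + G.ncomp F ≤ Nat.card V := by
  induction h : F.ncard generalizing F with
  | zero => simpa using ncomp_le_card F
  | succ n ih =>
    obtain ⟨e, he⟩ := Set.nonempty_of_ncard_ne_zero (s := F) (by omega)
    rcases hends : G.ends e with ⟨a, b⟩
    have hlt := ncomp_lt_of_not_conn Set.sdiff_subset (conn_of_ends he hends) (hF e he a b hends)
    have hcard := Set.ncard_sdiff_singleton_add_one he F.toFinite
    have := ih (F := F \ {e}) (hF.mono Set.sdiff_subset) (by omega)
    omega

end Components

section Contraction

lemma contract_ends_of_ends {e : ↥Sᶜ} {a b : V} (h : G.ends e.1 = s(a, b)) :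
    (G.contract S).ends e = s(Quot.mk (G.adj S) a, Quot.mk (G.adj S) b) := by
  change (G.ends e.1).map _ = _
  rw [h, Sym2.map_mk]

lemma conn_contract_of_conn {B : Set E} {T' : Set ↥Sᶜ} (hB : B ⊆ S ∪ Subtype.val '' T')
    {u v : V} (h : G.conn B u v) :
    (G.contract S).conn T' (Quot.mk (G.adj S) u) (Quot.mk (G.adj S) v) := by
  induction h with
  | refl => exact .refl
  | @tail x y _ hxy ih =>
    obtain ⟨e, he, hends⟩ := hxy
    rcases hB he with heS | ⟨e', he', rfl⟩
    · rwa [← (Quot.sound ⟨e, heS, hends⟩ : Quot.mk (G.adj S) x = Quot.mk _ y)]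
    · exact ih.tail ⟨e', he', contract_ends_of_ends hends⟩

lemma conn_union_image_of_conn_contract {F : Set E} {T' : Set ↥Sᶜ}
    (hF : ∀ x y, G.conn S x y → G.conn F x y) {u v : V}
    (h : (G.contract S).conn T' (Quot.mk (G.adj S) u) (Quot.mk (G.adj S) v)) :
    G.conn (F ∪ Subtype.val '' T') u v := by
  have hF' : ∀ x y, Quot.mk (G.adj S) x = Quot.mk (G.adj S) y →
      G.conn (F ∪ Subtype.val '' T') x y :=
    fun x y hxy => conn_mono Set.subset_union_left (hF x y (quot_mk_eq_iff_conn.mp hxy))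
  suffices ∀ {c}, (G.contract S).conn T' (Quot.mk (G.adj S) u) c →
      ∀ v, Quot.mk (G.adj S) v = c → G.conn (F ∪ Subtype.val '' T') u v from this h v rfl
  intro c hc
  induction hc with
  | refl => exact fun v hv => hF' u v hv.symm
  | @tail x y _ hxy ih =>
    intro v hv
    obtain ⟨e', he', hends⟩ := hxy
    have key : ∀ p q, G.ends e'.1 = s(p, q) → Quot.mk (G.adj S) p = x →
        Quot.mk (G.adj S) q = y → G.conn (F ∪ Subtype.val '' T') u v := fun p q hpq hp hq =>
      ((ih p hp).tail ⟨e'.1, Or.inr ⟨e', he', rfl⟩, hpq⟩).trans (hF' q v (hq.trans hv.symm))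
    rcases hpq : G.ends e'.1 with ⟨p, q⟩
    rw [contract_ends_of_ends hpq, Sym2.eq_iff] at hends
    rcases hends with ⟨hp, hq⟩ | ⟨hq, hp⟩
    · exact key p q hpq hp hq
    · exact key q p (hpq.trans Sym2.eq_swap) hp hq

lemma IsSpanningTree.preimage_val_contract {T : Set E} (hT : G.IsSpanningTree T)
    (hTS : G.IsSpanningForestOf S (T ∩ S)) :
    (G.contract S).IsSpanningTree (Subtype.val ⁻¹' T) := by
  constructor
  · intro e' he' x y hends hconn
    rcases hab : G.ends e'.1 with ⟨a, b⟩
    rw [contract_ends_of_ends hab, Sym2.eq_iff] at hends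
    have hab' : (G.contract S).conn (Subtype.val ⁻¹' T \ {e'})
        (Quot.mk (G.adj S) a) (Quot.mk (G.adj S) b) := by
      rcases hends with ⟨rfl, rfl⟩ | ⟨rfl, rfl⟩
      exacts [hconn, conn_symm hconn]
    refine hT.1 e'.1 he' a b hab (conn_mono ?_ (conn_union_image_of_conn_contract hTS.2.2 hab'))
    rintro z (⟨hz, hzS⟩ | ⟨g, ⟨hg, hne⟩, rfl⟩)
    · exact ⟨hz, fun h => e'.2 (h ▸ hzS)⟩
    · exact ⟨hg, fun h => hne (Subtype.ext h)⟩
  · rintro ⟨u⟩ ⟨v⟩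
    refine conn_contract_of_conn (fun z hz => ?_) (hT.2 u v)
    by_cases hzS : z ∈ S
    · exact .inl hzS
    · exact .inr ⟨⟨z, hzS⟩, hz, rfl⟩

variable [Finite E]

-- A path that leaves the `S`-component of its ends through an edge `f` of the contracted forest
-- has to come back through `f`, so `f` can be cut out of it.
lemma conn_of_conn_union_image {B : Set E} {T' : Set ↥Sᶜ} (hB : B ⊆ S)
    (hT' : (G.contract S).IsForest T') {u v : V} (huv : G.conn S u v)
    (h : G.conn (B ∪ Subtype.val '' T') u v) : G.conn B u v := by
  revert hT' h
  refine Set.Finite.induction_on T' T'.toFinite (fun _ h => by simpa using h) ?_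
  intro f T₀ hf _ ih hT h
  rcases conn_sdiff_singleton_or_of_conn (f := f.1) h with h' | ⟨a, b, hab, hua, hbv⟩
  · refine ih (hT.mono (Set.subset_insert _ _)) (conn_mono ?_ h')
    rintro x ⟨hx | ⟨g, hg | hg, rfl⟩, hne⟩
    · exact .inl hx
    · exact absurd (congrArg Subtype.val hg) hne
    · exact .inr ⟨g, hg, rfl⟩
  · have hsub : (B ∪ Subtype.val '' insert f T₀) \ {f.1} ⊆ S ∪ Subtype.val '' T₀ := by
      rintro x ⟨hx | ⟨g, hg | hg, rfl⟩, hne⟩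
      · exact .inl (hB hx)
      · exact absurd (congrArg Subtype.val hg) hne
      · exact .inr ⟨g, hg, rfl⟩
    have hab' : (G.contract S).conn T₀ (Quot.mk (G.adj S) a) (Quot.mk (G.adj S) b) := by
      have hbv' := conn_contract_of_conn (T' := T₀) hsub hbv
      rw [← quot_mk_eq_iff_conn.mpr huv] at hbv'
      exact (conn_symm (conn_contract_of_conn hsub hua)).trans (conn_symm hbv')
    refine absurd (conn_mono ?_ hab') (hT f (Set.mem_insert _ _) _ _ (contract_ends_of_ends hab))
    rw [Set.insert_sdiff_self_of_notMem hf]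

lemma IsForest.union_image {F : Set E} {T' : Set ↥Sᶜ} (hF : G.IsForest F) (hFS : F ⊆ S)
    (hT' : (G.contract S).IsForest T') : G.IsForest (F ∪ Subtype.val '' T') := by
  rintro e (he | ⟨e', he', rfl⟩) u v hends hconn
  · refine hF e he u v hends (conn_of_conn_union_image (Set.sdiff_subset.trans hFS) hT'
      (conn_of_ends (hFS he) hends) (conn_mono ?_ hconn))
    rintro x ⟨hx | hx, hne⟩
    · exact .inl ⟨hx, hne⟩
    · exact .inr hx
  · refine hT' e' he' _ _ (contract_ends_of_ends hends) (conn_contract_of_conn ?_ hconn)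
    rintro x ⟨hx | ⟨g, hg, rfl⟩, hne⟩
    · exact .inl (hFS hx)
    · exact .inr ⟨g, ⟨hg, fun h => hne (congrArg Subtype.val h)⟩, rfl⟩

lemma IsSpanningTree.union_image {F : Set E} {T' : Set ↥Sᶜ} (hF : G.IsSpanningForestOf S F)
    (hT' : (G.contract S).IsSpanningTree T') : G.IsSpanningTree (F ∪ Subtype.val '' T') :=
  ⟨hF.2.1.union_image hF.1 hT'.1, fun _ _ => conn_union_image_of_conn_contract hF.2.2 (hT'.2 _ _)⟩

end Contraction

section Factorization

variable [Finite E]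

lemma finprod_X_sdiff_mul_rename {F : Set E} (hFS : F ⊆ S) (T' : Set ↥Sᶜ) :
    (∏ᶠ e ∈ S \ F, (X e : MvPolynomial E ℝ)) * rename Subtype.val (∏ᶠ e ∈ T'ᶜ, X e) =
      ∏ᶠ e ∈ (F ∪ Subtype.val '' T')ᶜ, X e := by
  have hdisj : Disjoint (S \ F) (Subtype.val '' T'ᶜ) :=
    Set.disjoint_left.mpr fun _ hx ⟨g, _, hg⟩ => g.2 (hg ▸ hx.1)
  rw [rename_finprod_X Subtype.val_injective (Set.toFinite _), compl_union_image_val hFS,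
    finprod_mem_union hdisj (Set.toFinite _) (Set.toFinite _)]

-- A spanning tree `T` of `G` whose trace on `S` spans `S` splits as `(T ∩ S) ∪ T'`, with `T'` a
-- spanning tree of `G / S`, and the monomial of `T` factors accordingly.
lemma psiSub_mul_rename_psi_contract :
    G.psiSub S * rename Subtype.val (G.contract S).psi =
      ∑ᶠ T ∈ {T | G.IsSpanningTree T ∧ G.IsSpanningForestOf S (T ∩ S)},
        ∏ᶠ e ∈ Tᶜ, (X e : MvPolynomial E ℝ) := by
  classical
  simp only [psi, psiSub, finsum_mem_eq_finite_toFinset_sum _ (Set.toFinite _), map_sum,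
    Finset.sum_mul_sum, ← Finset.sum_product']
  refine Finset.sum_nbij' (fun p => p.1 ∪ Subtype.val '' p.2) (fun T => (T ∩ S, Subtype.val ⁻¹' T))
    ?_ ?_ ?_ (fun T _ => inter_union_image_preimage_val T) ?_
  · rintro ⟨F, T'⟩ h
    simp only [Finset.mem_product, Set.Finite.mem_toFinset, Set.mem_ofPred_eq] at h ⊢
    exact ⟨h.2.union_image h.1, by rw [union_image_val_inter h.1.1]; exact h.1⟩
  · intro T h
    simp only [Finset.mem_product, Set.Finite.mem_toFinset, Set.mem_ofPred_eq] at h ⊢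
    exact ⟨h.2, h.1.preimage_val_contract h.2⟩
  · rintro ⟨F, T'⟩ h
    simp only [Finset.mem_product, Set.Finite.mem_toFinset, Set.mem_ofPred_eq] at h
    simp only [union_image_val_inter h.1.1, preimage_val_union_image h.1.1]
  · rintro ⟨F, T'⟩ h
    simp only [Finset.mem_product, Set.Finite.mem_toFinset, Set.mem_ofPred_eq] at h
    exact finprod_X_sdiff_mul_rename h.1.1 T'

variable [Finite V]

lemma betti_lt_ncard_sdiff_of_not_isSpanningForestOf {T : Set E} (hT : G.IsForest T)
    (hTS : ¬ G.IsSpanningForestOf S (T ∩ S)) : G.betti S < (S \ T).ncard := by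
  have hF : G.IsForest (T ∩ S) := hT.mono Set.inter_subset_left
  obtain ⟨u, v, hS, hnF⟩ : ∃ u v, G.conn S u v ∧ ¬ G.conn (T ∩ S) u v := by
    by_contra! h
    exact hTS ⟨Set.inter_subset_right, hF, h⟩
  have hlt := ncomp_lt_of_not_conn Set.inter_subset_right hS hnF
  have hle := hF.ncard_add_ncomp_le
  have hsplit := Set.ncard_inter_add_ncard_sdiff_eq_ncard S T
  rw [Set.inter_comm] at hsplit
  rw [betti, Nat.card_coe_set_eq]
  omega

end Factorization

end MGraph

open MvPolynomial MGraph in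
theorem symanzik_factorization_general {V E : Type} [Finite V] [Finite E]
    (G : MGraph V E) (S : Set E) :
    ∃ R : MvPolynomial E ℝ,
      G.psi = G.psiSub S * rename Subtype.val (G.contract S).psi + R ∧
      ∀ m ∈ R.support, G.betti S < ∑ᶠ e ∈ S, (m e : ℤ) := by
  refine ⟨∑ᶠ T ∈ {T | G.IsSpanningTree T ∧ ¬ G.IsSpanningForestOf S (T ∩ S)},
    ∏ᶠ e ∈ Tᶜ, (X e : MvPolynomial E ℝ), ?_, fun m hm => ?_⟩
  · rw [psiSub_mul_rename_psi_contract]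
    exact (finsum_mem_inter_add_sdiff _ (Set.toFinite _)).symm
  · obtain ⟨T, ⟨hT, hTS⟩, hmT⟩ := exists_mem_support_of_mem_support_finsum_mem (Set.toFinite _) hm
    rw [sum_coe_eq_ncard_of_mem_support_finprod_X (Set.toFinite _) hmT, ← Set.sdiff_eq]
    exact betti_lt_ncard_sdiff_of_not_isSpanningForestOf hT.1 hTS

open MvPolynomial MGraph in
/-- ψ_G = ψ_γ · ψ_{G/γ} + R_γ, with every monomial of R_γ of degree
strictly greater than |γ| in the variables of E(γ). -/
theorem symanzik_factorization {V E : Type} [Finite V] [Finite E]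
    (G : MGraph V E) (hG : G.Connected) (S : Set E)
    (hγconn : ∀ u v : V, (∃ e ∈ S, u ∈ G.ends e) → (∃ e ∈ S, v ∈ G.ends e) →
      G.conn S u v) :
    ∃ R : MvPolynomial E ℝ,
      G.psi = G.psiSub S * rename Subtype.val (G.contract S).psi + R ∧
      ∀ m ∈ R.support, G.betti S < ∑ᶠ e ∈ S, (m e : ℤ) :=
  symanzik_factorization_general G S
end

section
/- Let G be a connected multigraph with N edges, |G| = n, and let γ ⊆ G be a bridgefree subgraph with N_γ edges and rank |γ| ≥ 1. In the local blowup coordinate y scaling all edges of γ simultaneously (x_e ↦ y·x_e for e ∈ E(γ)), the pullback of the projective Feynman form ω_G = ψ_G^{−d/2}(ψ_G/Ξ_G)^{N − nd/2} ν_N acquires a factor y^{−s_γ/2 − 1}, where s_γ = d|γ| − 2N_γ; i.e. the order of the pole at y = 0 is s_γ/2 + 1, under the assumptions that ψ_G ∘ ρ = y^{|γ|}·ψ̃ and Ξ_G ∘ ρ = y^{|γ|}·Ξ̃ with ψ̃, Ξ̃ not divisible by y. -/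
open MvPolynomial

/-! The factor `y ^ |γ|` shared by `ψ_G` and `Ξ_G` cancels in `ψ_G / Ξ_G` and survives only in
`ψ_G ^ (-d/2)`, as `y ^ (-|γ| d/2)`; the Jacobian `y ^ (N_γ - 1)` of `ν_N` then raises the exponent
to `-|γ| d/2 + N_γ - 1 = -s_γ/2 - 1`. -/

theorem rpow_mul_div_rpow_mul_left {t p : ℝ} (ht : 0 < t) (hp : 0 ≤ p) (q α c : ℝ) :
    (t * p) ^ α * (t * p / (t * q)) ^ c = t ^ α * (p ^ α * (p / q) ^ c) := by
  rw [mul_div_mul_left _ _ ht.ne', Real.mul_rpow ht.le hp, mul_assoc]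

theorem pow_rpow_mul_rpow {y : ℝ} (hy : 0 < y) (b : ℕ) (a m : ℝ) :
    (y ^ b) ^ a * y ^ m = y ^ (b * a + m) := by
  rw [← Real.rpow_natCast, ← Real.rpow_mul hy.le, Real.rpow_add hy]

open MvPolynomial MGraph Real in
theorem feynman_form_pole_order_general {V E : Type} (G : MGraph V E)
    (d : ℝ) (n N Nγ bγ : ℕ)
    (Ξ : (E → ℝ) → ℝ) (ψt Ξt : ℝ → (E → ℝ) → ℝ)
    (ρ : ℝ → (E → ℝ) → (E → ℝ))
    (hψ : ∀ (y : ℝ) (x : E → ℝ), eval (ρ y x) G.psi = y ^ bγ * ψt y x)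
    (hΞ : ∀ (y : ℝ) (x : E → ℝ), Ξ (ρ y x) = y ^ bγ * Ξt y x)
    (sγ : ℝ) (hs : sγ = d * bγ - 2 * Nγ) :
    ∀ (y : ℝ), 0 < y → ∀ x : E → ℝ, 0 < ψt y x → 0 < Ξt y x →
      (eval (ρ y x) G.psi) ^ (-(d / 2)) *
          ((eval (ρ y x) G.psi) / Ξ (ρ y x)) ^ ((N : ℝ) - n * d / 2) *
          y ^ ((Nγ : ℝ) - 1)
        = y ^ (-(sγ / 2) - 1) *
            ((ψt y x) ^ (-(d / 2)) * (ψt y x / Ξt y x) ^ ((N : ℝ) - n * d / 2)) := by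
  intro y hy x hψt _
  have hexp : -(sγ / 2) - 1 = bγ * -(d / 2) + ((Nγ : ℝ) - 1) := by rw [hs]; ring
  rw [hψ, hΞ, rpow_mul_div_rpow_mul_left (pow_pos hy bγ) hψt.le, hexp, ← pow_rpow_mul_rpow hy]
  ring

open MvPolynomial MGraph Real in
/-- in the local blowup coordinate y scaling all edges of a core
subgraph γ (edge set S, rank bγ ≥ 1, N_γ edges), and given the factorizations
ψ_G ∘ ρ = y^{|γ|}·ψ̃ and Ξ_G ∘ ρ = y^{|γ|}·Ξ̃, the pullback of the projective
Feynman integrand ψ^{−d/2}(ψ/Ξ)^{N−nd/2} times the Jacobian factor y^{N_γ−1}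
coming from ν_N acquires exactly the factor y^{−s_γ/2−1}, s_γ = d|γ| − 2N_γ. -/
theorem feynman_form_pole_order {V E : Type} [Finite V] [Finite E]
    (G : MGraph V E) (S : Set E) (hcore : G.IsCore S)
    (d : ℝ) (n N Nγ bγ : ℕ)
    (hn : G.rank = (n : ℤ)) (hN : Nat.card E = N) (hNγ : Nat.card S = Nγ)
    (hbγ : G.betti S = (bγ : ℤ)) (hb1 : 1 ≤ bγ)
    (Ξ : (E → ℝ) → ℝ) (ψt Ξt : ℝ → (E → ℝ) → ℝ)
    (ρ : ℝ → (E → ℝ) → (E → ℝ))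
    (hρ : ∀ (y : ℝ) (x : E → ℝ),
      (∀ e ∈ S, ρ y x e = y * x e) ∧ ∀ e ∉ S, ρ y x e = x e)
    (hψ : ∀ (y : ℝ) (x : E → ℝ), eval (ρ y x) G.psi = y ^ bγ * ψt y x)
    (hΞ : ∀ (y : ℝ) (x : E → ℝ), Ξ (ρ y x) = y ^ bγ * Ξt y x)
    (sγ : ℝ) (hs : sγ = d * bγ - 2 * Nγ) :
    ∀ (y : ℝ), 0 < y → ∀ x : E → ℝ, 0 < ψt y x → 0 < Ξt y x →
      (eval (ρ y x) G.psi) ^ (-(d / 2)) *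
          ((eval (ρ y x) G.psi) / Ξ (ρ y x)) ^ ((N : ℝ) - n * d / 2) *
          y ^ ((Nγ : ℝ) - 1)
        = y ^ (-(sγ / 2) - 1) *
            ((ψt y x) ^ (-(d / 2)) * (ψt y x / Ξt y x) ^ ((N : ℝ) - n * d / 2)) :=
  feynman_form_pole_order_general G d n N Nγ bγ Ξ ψt Ξt ρ hψ hΞ sγ hs
end
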